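/- arXiv:2509.14193 — 3 statements merged into one kernel-verified Lean document; each statement's English description precedes it below -/
import Mathlib

section
/- Let G be a signed graph with edge connectivity κ_e(G) and frustration index φ(G), and let 𝒢 be its Gremban expansion. Then the edge connectivity of 𝒢 satisfies κ_e(𝒢) ≤ 2·min{κ_e(G), φ(G)}. -/
/-- A signed graph: a simple graph together with a symmetric `±1`-valued sign function
on its edges. -/
structure SignedGraph (V : Type*) where
  G : SimpleGraph V
  sign : V → V → ℤ
  sign_symm : ∀ u v, sign u v = sign v u
  sign_pm : ∀ u v, G.Adj u v → sign u v = 1 ∨ sign u v = -1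

namespace SignedGraph

variable {V : Type*} (S : SignedGraph V)

/-- The Gremban expansion of a signed graph: each vertex `v` is doubled into the two
polarities `(v, true)` (positive) and `(v, false)` (negative); a positive edge lifts to
two edges between equal polarities, and a negative edge to two edges between opposite
polarities. -/
def gremban : SimpleGraph (V × Bool) where
  Adj x y := S.G.Adj x.1 y.1 ∧ ((x.2 = y.2) ↔ S.sign x.1 y.1 = 1)
  symm := by
    constructor
    rintro ⟨u, a⟩ ⟨v, b⟩ ⟨h, hs⟩
    refine ⟨h.symm, ?_⟩
    rw [S.sign_symm v u, eq_comm]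
    exact hs
  loopless := by
    constructor
    rintro ⟨u, a⟩ ⟨h, _⟩
    exact S.G.irrefl h

/-- The Gremban involution, swapping the two polarities of every vertex. -/
def eta : V × Bool → V × Bool := fun x => (x.1, !x.2)

end SignedGraph

open SignedGraph

/-- The set of edges of `G` with one endpoint in `A` and the other in `B`. -/
def cutEdges {V : Type*} (G : SimpleGraph V) (A B : Set V) : Set (Sym2 V) :=
  {e | e ∈ G.edgeSet ∧ ∃ u v, e = s(u, v) ∧ u ∈ A ∧ v ∈ B}

/-- The edge connectivity of a graph: the minimum size of a cut-set over all
bipartitions of the vertex set into two nonempty parts. -/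
noncomputable def edgeConn {V : Type*} (G : SimpleGraph V) : ℕ :=
  sInf {n | ∃ A : Set V, A.Nonempty ∧ Aᶜ.Nonempty ∧ (cutEdges G A Aᶜ).ncard = n}

/-- The frustration set of a switching function `θ`: the edges that are negative after
switching by `θ`. -/
def frustEdges {V : Type*} (S : SignedGraph V) (θ : V → ℤ) : Set (Sym2 V) :=
  {e | e ∈ S.G.edgeSet ∧ ∃ u v, e = s(u, v) ∧ θ u * θ v * S.sign u v = -1}

/-- The frustration index of a signed graph: the minimum size of a frustration set over
all switching functions `θ : V → {±1}`. -/
noncomputable def frustIndex {V : Type*} (S : SignedGraph V) : ℕ :=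
  sInf {n | ∃ θ : V → ℤ, (∀ v, θ v = 1 ∨ θ v = -1) ∧ (frustEdges S θ).ncard = n}

/-!
Every edge of `G` has exactly two lifts in the Gremban expansion, so a vertex set of the
expansion whose cut edges all lie above a set `T` of edges of `G` gives
`κ_e(𝒢) ≤ 2 |T|`. The preimage of a minimum cut `A` of `G` has as cut edges the lifts of the
cut edges of `A`; for an optimal switching `θ`, the set of vertices `(v, θ v)` has as cut edges
the lifts of the frustrated edges.
-/

theorem Set.ncard_le_mul_ncard_of_mapsTo {α β : Type*} {s : Set α} {t : Set β} {f : α → β}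
    (hs : s.Finite) (ht : t.Finite) (hf : Set.MapsTo f s t) (n : ℕ)
    (hn : ∀ b ∈ t, {a ∈ s | f a = b}.ncard ≤ n) : s.ncard ≤ n * t.ncard := by
  classical
  obtain ⟨s, rfl⟩ := hs.exists_finset_coe
  obtain ⟨t, rfl⟩ := ht.exists_finset_coe
  simp only [Set.ncard_coe_finset]
  refine Finset.card_le_mul_card_image_of_maps_to hf n fun b hb => ?_
  simpa [← Finset.coe_filter, Set.ncard_coe_finset] using hn b hb

section EdgeConn

variable {V : Type*} (G : SimpleGraph V)

theorem edgeConn_le_ncard_cutEdges {A : Set V} (hA : A.Nonempty) (hAc : Aᶜ.Nonempty) :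
    edgeConn G ≤ (cutEdges G A Aᶜ).ncard :=
  Nat.sInf_le ⟨A, hA, hAc, rfl⟩

theorem edgeConn_eq_zero_of_subsingleton [Subsingleton V] : edgeConn G = 0 := by
  refine Nat.sInf_eq_zero.2 (Or.inr (Set.eq_empty_of_forall_notMem ?_))
  rintro n ⟨A, ⟨a, ha⟩, ⟨b, hb⟩, -⟩
  exact hb (Subsingleton.elim a b ▸ ha)

theorem exists_ncard_cutEdges_eq_edgeConn [Nontrivial V] :
    ∃ A : Set V, A.Nonempty ∧ Aᶜ.Nonempty ∧ (cutEdges G A Aᶜ).ncard = edgeConn G := by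
  obtain ⟨a, b, hab⟩ := exists_pair_ne V
  exact Nat.sInf_mem (⟨_, {a}, Set.singleton_nonempty a, ⟨b, hab.symm⟩, rfl⟩ :
    {n | ∃ A : Set V, A.Nonempty ∧ Aᶜ.Nonempty ∧ (cutEdges G A Aᶜ).ncard = n}.Nonempty)

end EdgeConn

namespace SignedGraph

variable {V : Type*} (S : SignedGraph V)

theorem exists_ncard_frustEdges_eq_frustIndex :
    ∃ θ : V → ℤ, (∀ v, θ v = 1 ∨ θ v = -1) ∧ (frustEdges S θ).ncard = frustIndex S :=
  Nat.sInf_mem (⟨_, fun _ => 1, fun _ => Or.inl rfl, rfl⟩ :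
    {n | ∃ θ : V → ℤ, (∀ v, θ v = 1 ∨ θ v = -1) ∧ (frustEdges S θ).ncard = n}.Nonempty)

theorem frustIndex_eq_zero_of_subsingleton [Subsingleton V] : frustIndex S = 0 := by
  refine Nat.eq_zero_of_le_zero (Nat.sInf_le ⟨fun _ => 1, fun _ => Or.inl rfl, ?_⟩)
  rw [Set.ncard_eq_zero, Set.eq_empty_iff_forall_notMem]
  rintro e ⟨he, u, v, rfl, -⟩
  exact S.G.ne_of_adj he (Subsingleton.elim u v)

theorem gremban_adj {u v : V} {a b : Bool} :
    S.gremban.Adj (u, a) (v, b) ↔ S.G.Adj u v ∧ (a = b ↔ S.sign u v = 1) :=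
  Iff.rfl

theorem ncard_gremban_edges_over_le (u v : V) :
    {f ∈ S.gremban.edgeSet | f.map Prod.fst = s(u, v)}.ncard ≤ 2 := by
  set c := decide (S.sign u v = 1)
  have hsub : {f ∈ S.gremban.edgeSet | f.map Prod.fst = s(u, v)} ⊆
      {s((u, true), (v, c)), s((u, false), (v, !c))} := by
    rintro f ⟨hf, hmap⟩
    induction f using Sym2.ind with
    | _ x y =>
      obtain ⟨x, a⟩ := x
      obtain ⟨y, b⟩ := y
      rw [SimpleGraph.mem_edgeSet, gremban_adj] at hf
      rw [Sym2.map_mk, Sym2.eq_iff] at hmap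
      rcases hmap with ⟨rfl, rfl⟩ | ⟨rfl, rfl⟩
      · cases a <;> cases b <;> simp_all [c]
      · rw [S.sign_symm] at hf
        cases a <;> cases b <;> simp_all [c]
  exact (Set.ncard_le_ncard hsub (Set.toFinite _)).trans
    ((Set.ncard_insert_le _ _).trans (by simp))

variable [Finite V]

theorem ncard_le_two_mul_of_mapsTo {P : Set (Sym2 (V × Bool))} {T : Set (Sym2 V)}
    (hP : P ⊆ S.gremban.edgeSet) (hPT : Set.MapsTo (Sym2.map Prod.fst) P T) :
    P.ncard ≤ 2 * T.ncard := by
  refine Set.ncard_le_mul_ncard_of_mapsTo (Set.toFinite _) (Set.toFinite _) hPT 2 fun e _ => ?_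
  induction e using Sym2.ind with
  | _ u v =>
    refine le_trans (Set.ncard_le_ncard ?_ (Set.toFinite _)) (S.ncard_gremban_edges_over_le u v)
    exact fun f ⟨hf, hmap⟩ => ⟨hP hf, hmap⟩

theorem edgeConn_gremban_le_two_mul_ncard_cutEdges {A : Set V} (hA : A.Nonempty)
    (hAc : Aᶜ.Nonempty) : edgeConn S.gremban ≤ 2 * (cutEdges S.G A Aᶜ).ncard := by
  obtain ⟨a, ha⟩ := hA
  obtain ⟨b, hb⟩ := hAc
  refine (edgeConn_le_ncard_cutEdges S.gremban (A := Prod.fst ⁻¹' A) ⟨(a, true), ha⟩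
    ⟨(b, true), hb⟩).trans (S.ncard_le_two_mul_of_mapsTo (fun f hf => hf.1) ?_)
  rintro f ⟨hf, x, y, rfl, hx, hy⟩
  exact ⟨((S.gremban.mem_edgeSet).1 hf).1, x.1, y.1, rfl, hx, hy⟩

theorem edgeConn_gremban_le_two_mul_ncard_frustEdges {θ : V → ℤ}
    (hθ : ∀ v, θ v = 1 ∨ θ v = -1) : edgeConn S.gremban ≤ 2 * (frustEdges S θ).ncard := by
  rcases isEmpty_or_nonempty V with hV | ⟨⟨w⟩⟩
  · simp [edgeConn_eq_zero_of_subsingleton]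
  let A : Set (V × Bool) := {p | p.2 = decide (θ p.1 = 1)}
  refine (edgeConn_le_ncard_cutEdges S.gremban (A := A) ⟨(w, decide (θ w = 1)), by simp [A]⟩
    ⟨(w, !decide (θ w = 1)), by simp [A]⟩).trans
    (S.ncard_le_two_mul_of_mapsTo (fun f hf => hf.1) ?_)
  rintro f ⟨hf, ⟨u, a⟩, ⟨v, b⟩, rfl, hu, hv⟩
  obtain ⟨hadj, hsign⟩ := (S.gremban.mem_edgeSet).1 hf
  refine ⟨(S.G.mem_edgeSet).2 hadj, u, v, rfl, ?_⟩
  simp only [A, Set.mem_compl_iff, Set.mem_ofPred_eq] at hu hv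
  rcases hθ u with hθu | hθu <;> rcases hθ v with hθv | hθv <;>
    rcases S.sign_pm u v hadj with hs | hs <;> simp_all

end SignedGraph

/-- The edge connectivity of the Gremban expansion of a signed graph `G` is at most
twice the minimum of the edge connectivity and the frustration index of `G`. -/
theorem gremban_edgeConn_le {V : Type*} [Fintype V] (S : SignedGraph V) :
    edgeConn S.gremban ≤ 2 * min (edgeConn S.G) (frustIndex S) := by
  have hfrust : edgeConn S.gremban ≤ 2 * frustIndex S := by
    obtain ⟨θ, hθ, hcard⟩ := S.exists_ncard_frustEdges_eq_frustIndex
    exact hcard ▸ S.edgeConn_gremban_le_two_mul_ncard_frustEdges hθ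
  have hcut : edgeConn S.gremban ≤ 2 * edgeConn S.G := by
    rcases subsingleton_or_nontrivial V with hV | hV
    · exact hfrust.trans (by simp [S.frustIndex_eq_zero_of_subsingleton])
    · obtain ⟨A, hA, hAc, hcard⟩ := exists_ncard_cutEdges_eq_edgeConn S.G
      exact hcard ▸ S.edgeConn_gremban_le_two_mul_ncard_cutEdges hA hAc
  rw [← Nat.mul_min_mul_left]
  exact le_min hcut hfrust
end

section
/- Let G be a balanced signed graph with signed adjacency matrix A, and let 𝒜 be the adjacency matrix of its Gremban expansion. Then the spectrum of 𝒜 equals the spectrum of A with every multiplicity doubled: spec(𝒜) = spec(A) ∪ spec(A) as multisets. -/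
open SignedGraph

namespace SignedGraph

variable {V : Type*} [Fintype V] [DecidableEq V]

open Classical in
/-- The signed adjacency matrix of a signed graph. -/
noncomputable def adjMat (S : SignedGraph V) : Matrix V V ℝ :=
  fun u v => if S.G.Adj u v then (S.sign u v : ℝ) else 0

/-- The positive part `A⁺ = max(A, 0)` of the signed adjacency matrix. -/
noncomputable def adjPos (S : SignedGraph V) : Matrix V V ℝ :=
  fun u v => max (S.adjMat u v) 0

/-- The negative part `A⁻ = max(−A, 0)` of the signed adjacency matrix. -/
noncomputable def adjNeg (S : SignedGraph V) : Matrix V V ℝ :=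
  fun u v => max (-S.adjMat u v) 0

/-- The Gremban adjacency matrix `𝒜 = [[A⁺, A⁻],[A⁻, A⁺]]`, which is the adjacency
matrix of the Gremban expansion. -/
noncomputable def grembanAdj (S : SignedGraph V) : Matrix (V ⊕ V) (V ⊕ V) ℝ :=
  Matrix.fromBlocks (S.adjPos) (S.adjNeg) (S.adjNeg) (S.adjPos)

/-- A signed graph is balanced if some switching function `θ : V → {±1}` makes all edge
signs positive. -/
def BalancedSw (S : SignedGraph V) : Prop :=
  ∃ θ : V → ℤ, (∀ v, θ v = 1 ∨ θ v = -1) ∧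
    ∀ u v, S.G.Adj u v → θ u * θ v * S.sign u v = 1

end SignedGraph

/-! Adding the second block row of `𝒜 = [[A⁺, A⁻], [A⁻, A⁺]]` to the first and subtracting the
first block column from the second are unimodular operations turning `X - 𝒜` block triangular with
diagonal blocks `X - (A⁺ + A⁻)` and `X - (A⁺ - A⁻)`, so `χ_𝒜 = χ_{|A|} · χ_A`. If `G` is balanced
then `|A| = D_θ A D_θ` with `D_θ² = 1`, hence `χ_{|A|} = χ_A`. -/

namespace Matrix

variable {n R : Type*} [Fintype n] [DecidableEq n] [CommRing R]

theorem det_fromBlocks_self (A B : Matrix n n R) :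
    (fromBlocks A B B A).det = (A + B).det * (A - B).det := by
  have hL : (fromBlocks 1 1 0 1 : Matrix (n ⊕ n) (n ⊕ n) R).det = 1 := by simp
  have hR : (fromBlocks 1 (-1) 0 1 : Matrix (n ⊕ n) (n ⊕ n) R).det = 1 := by simp
  have hreduce : fromBlocks 1 1 0 1 * fromBlocks A B B A * fromBlocks 1 (-1) 0 1 =
      fromBlocks (A + B) 0 B (A - B) := by
    simp only [fromBlocks_multiply]
    congr 1 <;> noncomm_ring
  calc (fromBlocks A B B A).det
      = (fromBlocks 1 1 0 1 * fromBlocks A B B A * fromBlocks 1 (-1) 0 1).det := by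
        rw [det_mul, det_mul, hL, hR, one_mul, mul_one]
    _ = (A + B).det * (A - B).det := by rw [hreduce, det_fromBlocks_zero₁₂]

theorem charpoly_fromBlocks_self (A B : Matrix n n R) :
    (fromBlocks A B B A).charpoly = (A + B).charpoly * (A - B).charpoly := by
  have hadd : charmatrix A + -B.map Polynomial.C = charmatrix (A + B) := by
    simp only [charmatrix, map_add]; abel
  have hsub : charmatrix A - -B.map Polynomial.C = charmatrix (A - B) := by
    simp only [charmatrix, map_sub]; abel
  rw [charpoly, charmatrix_fromBlocks, det_fromBlocks_self, hadd, hsub, charpoly, charpoly]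

theorem charpoly_conj_of_mul_self_eq_one {D : Matrix n n R} (hD : D * D = 1) (M : Matrix n n R) :
    (D * M * D).charpoly = M.charpoly := by
  rw [charpoly_mul_comm, ← Matrix.mul_assoc, hD, Matrix.one_mul]

end Matrix

namespace SignedGraph

variable {V : Type*} (S : SignedGraph V)

theorem adjPos_sub_adjNeg : S.adjPos - S.adjNeg = S.adjMat := by
  ext u v
  exact max_zero_sub_max_neg_zero_eq_self _

theorem adjPos_add_adjNeg : S.adjPos + S.adjNeg = S.adjMat.map abs := by
  ext u v
  exact max_zero_add_max_neg_zero_eq_abs_self _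

theorem diagonal_mul_adjMat_map_abs_mul_diagonal [Fintype V] [DecidableEq V] {θ : V → ℤ}
    (hθ : ∀ v, θ v = 1 ∨ θ v = -1)
    (hsw : ∀ u v, S.G.Adj u v → θ u * θ v * S.sign u v = 1) :
    Matrix.diagonal (θ · : V → ℝ) * S.adjMat.map abs * Matrix.diagonal (θ · : V → ℝ) =
      S.adjMat := by
  ext u v
  rw [Matrix.mul_diagonal, Matrix.diagonal_mul, Matrix.map_apply, adjMat]
  split_ifs with hadj
  · have hs := hsw u v hadj
    rcases S.sign_pm u v hadj with h | h <;> rcases hθ u with hu | hu <;>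
      rcases hθ v with hv | hv <;> simp_all
  · simp

theorem BalancedSw.charpoly_adjMat_map_abs [Fintype V] [DecidableEq V] (h : S.BalancedSw) :
    (S.adjMat.map abs).charpoly = S.adjMat.charpoly := by
  obtain ⟨θ, hθ, hsw⟩ := h
  have hθθ : Matrix.diagonal (θ · : V → ℝ) * Matrix.diagonal (θ · : V → ℝ) = 1 := by
    rw [Matrix.diagonal_mul_diagonal, ← Matrix.diagonal_one]
    congr 1
    ext v
    rcases hθ v with hv | hv <;> simp [hv]
  rw [← Matrix.charpoly_conj_of_mul_self_eq_one hθθ,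
    S.diagonal_mul_adjMat_map_abs_mul_diagonal hθ hsw]

end SignedGraph

/-- For a balanced signed graph `G` with signed adjacency matrix `A` and Gremban
adjacency matrix `𝒜`, the spectrum of `𝒜` equals the spectrum of `A` with every
multiplicity doubled: the characteristic polynomial of `𝒜` is the square of that
of `A`. -/
theorem balanced_gremban_adj_spectrum {V : Type*} [Fintype V] [DecidableEq V]
    (S : SignedGraph V) (hbal : S.BalancedSw) :
    (S.grembanAdj).charpoly = (S.adjMat).charpoly ^ 2 := by
  rw [grembanAdj, Matrix.charpoly_fromBlocks_self, adjPos_add_adjNeg, adjPos_sub_adjNeg,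
    hbal.charpoly_adjMat_map_abs, sq]
end

section
/- Let G be a signed graph with k connected components, of which ℓ are structurally balanced, and let ℒ be the Laplacian of its Gremban expansion. Then the kernel of ℒ has dimension k + ℓ. -/
open SignedGraph

namespace SignedGraph

variable {V : Type*} [Fintype V] [DecidableEq V]

/-- The degree matrix `K` of a signed graph: the diagonal matrix of (unsigned)
degrees, i.e. row sums of `Ā = A⁺ + A⁻`. -/
noncomputable def degMat (S : SignedGraph V) : Matrix V V ℝ :=
  Matrix.diagonal fun v => ∑ w, (S.adjPos v w + S.adjNeg v w)

/-- The signed Laplacian `L = K − A⁺ + A⁻`. -/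
noncomputable def signedLap (S : SignedGraph V) : Matrix V V ℝ :=
  S.degMat - S.adjPos + S.adjNeg

/-- The unsigned Laplacian `L̄ = K − A⁺ − A⁻`. -/
noncomputable def unsignedLap (S : SignedGraph V) : Matrix V V ℝ :=
  S.degMat - S.adjPos - S.adjNeg

/-- The Gremban Laplacian `ℒ = [[K − A⁺, −A⁻],[−A⁻, K − A⁺]]`, the Laplacian matrix of
the Gremban expansion. -/
noncomputable def grembanLap (S : SignedGraph V) : Matrix (V ⊕ V) (V ⊕ V) ℝ :=
  Matrix.fromBlocks (S.degMat - S.adjPos) (-S.adjNeg) (-S.adjNeg) (S.degMat - S.adjPos)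

end SignedGraph

/-- A connected component `c` of a signed graph is structurally balanced if some
switching function `θ : V → {±1}` makes all edges within `c` positive. -/
def SignedGraph.compBalanced {V : Type*} (S : SignedGraph V)
    (c : S.G.ConnectedComponent) : Prop :=
  ∃ θ : V → ℤ, (∀ v, θ v = 1 ∨ θ v = -1) ∧
    ∀ u v, S.G.Adj u v → S.G.connectedComponentMk u = c →
      θ u * θ v * S.sign u v = 1

/-!
The Gremban Laplacian is, after reindexing `V ⊕ V ≃ V × Bool`, the ordinary Laplacian of the
Gremban expansion, so its kernel has dimension the number of components of the expansion.
Projecting to `G`, the component of `v` has at most two preimages, those of `(v, true)` and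
`(v, false)`. They coincide iff the component is unbalanced: a switching `θ` balancing it makes
`θ u * polaritySign b` constant along Gremban walks, while conversely, if `(v, false)` is not
reachable from `(v, true)`, recording which copy of each vertex is reachable gives a switching.
-/

theorem Matrix.finrank_ker_mulVecLin_submatrix {K m n m₀ n₀ : Type*} [Field K] [Fintype n]
    [Fintype n₀] (A : Matrix m n K) (em : m₀ ≃ m) (en : n₀ ≃ n) :
    Module.finrank K (LinearMap.ker (A.submatrix em en).mulVecLin) =
      Module.finrank K (LinearMap.ker A.mulVecLin) := by
  have h₀ := (A.submatrix em en).mulVecLin.finrank_range_add_finrank_ker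
  have h := A.mulVecLin.finrank_range_add_finrank_ker
  rw [← Matrix.rank, Matrix.rank_submatrix, Module.finrank_fintype_fun_eq_card,
    Fintype.card_congr en] at h₀
  rw [← Matrix.rank, Module.finrank_fintype_fun_eq_card] at h
  omega

namespace SignedGraph

open SimpleGraph

variable {V : Type*} (S : SignedGraph V)

def polaritySign : Bool → ℤ
  | true => 1
  | false => -1

lemma polaritySign_eq_one_or_neg_one (b : Bool) : polaritySign b = 1 ∨ polaritySign b = -1 := by
  cases b <;> simp [polaritySign]

lemma gremban_adj_iff {u w : V} {a b : Bool} :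
    S.gremban.Adj (u, a) (w, b) ↔
      S.G.Adj u w ∧ polaritySign a * polaritySign b * S.sign u w = 1 := by
  refine and_congr_right fun h => ?_
  rcases S.sign_pm u w h with hs | hs <;> cases a <;> cases b <;> simp [hs, polaritySign]

lemma exists_gremban_adj {u w : V} (h : S.G.Adj u w) (a : Bool) :
    ∃ b, S.gremban.Adj (u, a) (w, b) := by
  by_cases hs : S.sign u w = 1
  · exact ⟨a, h, by simp [hs]⟩
  · exact ⟨!a, h, by simp [hs]⟩

lemma exists_gremban_reachable {u w : V} (h : S.G.Reachable u w) (a : Bool) :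
    ∃ b, S.gremban.Reachable (u, a) (w, b) := by
  obtain ⟨p⟩ := h
  induction p generalizing a with
  | nil => exact ⟨a, .rfl⟩
  | cons h _ ih =>
    obtain ⟨b, hab⟩ := S.exists_gremban_adj h a
    obtain ⟨c, hbc⟩ := ih b
    exact ⟨c, hab.reachable.trans hbc⟩

def grembanProj : S.gremban →g S.G := ⟨Prod.fst, And.left⟩

def grembanSwap : S.gremban →g S.gremban :=
  ⟨eta, by
    rintro ⟨u, a⟩ ⟨w, b⟩ ⟨h, hs⟩
    exact ⟨h, by simpa [eta] using hs⟩⟩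

lemma switch_mul_polaritySign_eq_of_adj {θ : V → ℤ} (hθ : ∀ v, θ v = 1 ∨ θ v = -1)
    {x y : V × Bool} (hxy : S.gremban.Adj x y) (hbal : θ x.1 * θ y.1 * S.sign x.1 y.1 = 1) :
    θ x.1 * polaritySign x.2 = θ y.1 * polaritySign y.2 := by
  obtain ⟨u, a⟩ := x
  obtain ⟨w, b⟩ := y
  obtain ⟨h, hσ⟩ := S.gremban_adj_iff.mp hxy
  rcases hθ u with hu | hu <;> rcases hθ w with hw | hw <;>
    rcases S.sign_pm u w h with hs | hs <;> cases a <;> cases b <;>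
    simp_all [polaritySign]

theorem not_reachable_of_compBalanced {v : V} (hb : S.compBalanced (S.G.connectedComponentMk v)) :
    ¬ S.gremban.Reachable (v, true) (v, false) := by
  obtain ⟨θ, hθ, hbal⟩ := hb
  suffices key : ∀ y, S.gremban.Reachable (v, true) y →
      S.G.connectedComponentMk y.1 = S.G.connectedComponentMk v ∧
        θ y.1 * polaritySign y.2 = θ v by
    intro h
    have := (key _ h).2
    rcases hθ v with hv | hv <;> simp [hv, polaritySign] at this
  intro y hy
  rw [reachable_iff_reflTransGen] at hy
  induction hy with
  | refl => simp [polaritySign]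
  | tail _ hxy ih =>
    obtain ⟨hx, hxv⟩ := ih
    refine ⟨(ConnectedComponent.connectedComponentMk_eq_of_adj hxy.1).symm.trans hx, ?_⟩
    rw [← S.switch_mul_polaritySign_eq_of_adj hθ hxy (hbal _ _ hxy.1 hx), hxv]

lemma eq_of_reachable_of_reachable {v u : V} {a b : Bool}
    (h : ¬ S.gremban.Reachable (v, true) (v, false))
    (ha : S.gremban.Reachable (v, true) (u, a)) (hb : S.gremban.Reachable (v, true) (u, b)) :
    a = b := by
  by_contra hne
  obtain rfl : b = !a := by cases a <;> cases b <;> simp_all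
  have hb' : S.gremban.Reachable (v, false) (u, a) := by
    simpa [grembanSwap, eta] using hb.map S.grembanSwap
  exact h (ha.trans hb'.symm)

theorem compBalanced_of_not_reachable {v : V} (h : ¬ S.gremban.Reachable (v, true) (v, false)) :
    S.compBalanced (S.G.connectedComponentMk v) := by
  classical
  let θ u := polaritySign (decide (S.gremban.Reachable (v, true) (u, true)))
  have hθ {u : V} {b : Bool} (hb : S.gremban.Reachable (v, true) (u, b)) :
      θ u = polaritySign b := by
    simp only [θ]
    congr 1
    cases b
    · exact decide_eq_false fun ht => Bool.false_ne_true (S.eq_of_reachable_of_reachable h hb ht)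
    · exact decide_eq_true hb
  refine ⟨θ, fun u => polaritySign_eq_one_or_neg_one _, fun u w huw hu => ?_⟩
  obtain ⟨a, ha⟩ := S.exists_gremban_reachable (ConnectedComponent.eq.mp hu.symm) true
  obtain ⟨b, hab⟩ := S.exists_gremban_adj huw a
  rw [hθ ha, hθ (ha.trans hab.reachable)]
  exact (S.gremban_adj_iff.mp hab).2

theorem reachable_iff_not_compBalanced {v : V} :
    S.gremban.Reachable (v, true) (v, false) ↔ ¬ S.compBalanced (S.G.connectedComponentMk v) :=
  ⟨fun h hb => S.not_reachable_of_compBalanced hb h,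
    fun hb => by_contra fun h => hb (S.compBalanced_of_not_reachable h)⟩

lemma map_grembanProj_eq_iff {d : S.gremban.ConnectedComponent} {v : V} :
    d.map S.grembanProj = S.G.connectedComponentMk v ↔
      d = S.gremban.connectedComponentMk (v, true) ∨
        d = S.gremban.connectedComponentMk (v, false) := by
  induction d using ConnectedComponent.ind with | h x => ?_
  simp only [ConnectedComponent.map_mk, ConnectedComponent.eq]
  constructor
  · intro hx
    obtain ⟨b, hb⟩ := S.exists_gremban_reachable hx x.2
    cases b
    · exact .inr hb
    · exact .inl hb
  · rintro (h | h) <;> exact h.map S.grembanProj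

open Finset in
theorem card_connectedComponent_gremban [Finite V] :
    Nat.card S.gremban.ConnectedComponent =
      Nat.card S.G.ConnectedComponent + {c | S.compBalanced c}.ncard := by
  classical
  have := Fintype.ofFinite S.G.ConnectedComponent
  have := Fintype.ofFinite S.gremban.ConnectedComponent
  have hfiber (c : S.G.ConnectedComponent) :
      #{d : S.gremban.ConnectedComponent | d.map S.grembanProj = c} =
        if S.compBalanced c then 2 else 1 := by
    induction c using ConnectedComponent.ind with | h v => ?_
    have hpair : univ.filter (fun d => d.map S.grembanProj = S.G.connectedComponentMk v) =
        {S.gremban.connectedComponentMk (v, true), S.gremban.connectedComponentMk (v, false)} := by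
      ext d
      simp [S.map_grembanProj_eq_iff]
    rw [hpair]
    split_ifs with hb
    · exact card_pair fun h => S.not_reachable_of_compBalanced hb (ConnectedComponent.eq.mp h)
    · rw [ConnectedComponent.eq.mpr (S.reachable_iff_not_compBalanced.mpr hb),
        insert_eq_self.mpr (mem_singleton_self _), card_singleton]
  rw [Nat.card_eq_fintype_card, Nat.card_eq_fintype_card, Set.ncard_eq_toFinset_card',
    ← card_univ, card_eq_sum_card_fiberwise (f := ConnectedComponent.map S.grembanProj)
      (t := univ) fun _ _ => mem_univ _]
  simp only [hfiber, Set.toFinset_ofPred]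
  rw [card_filter, ← card_univ, card_eq_sum_ones, ← sum_add_distrib]
  exact sum_congr rfl fun c _ => by split_ifs <;> rfl

def polarityEquiv : V ⊕ V ≃ V × Bool :=
  (Equiv.sumComm V V).trans ((Equiv.boolProdEquivSum V).symm.trans (Equiv.prodComm Bool V))

@[simp] lemma polarityEquiv_inl (v : V) : polarityEquiv (Sum.inl v) = (v, true) := rfl

@[simp] lemma polarityEquiv_inr (v : V) : polarityEquiv (Sum.inr v) = (v, false) := rfl

variable [DecidableRel S.gremban.Adj]

lemma adjMatrix_gremban_apply (u w : V) (a b : Bool) :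
    S.gremban.adjMatrix ℝ (u, a) (w, b) = if a = b then S.adjPos u w else S.adjNeg u w := by
  simp only [adjMatrix_apply, adjPos, adjNeg, adjMat]
  by_cases h : S.G.Adj u w
  · rcases S.sign_pm u w h with hs | hs <;> cases a <;> cases b <;> simp [gremban, h, hs]
  · simp [gremban, h]

lemma adjMatrix_gremban_submatrix :
    (S.gremban.adjMatrix ℝ).submatrix polarityEquiv polarityEquiv = S.grembanAdj := by
  ext (u | u) (w | w) <;> simp [grembanAdj, -adjMatrix_apply, adjMatrix_gremban_apply]

variable [Fintype V]

lemma degree_gremban (v : V) (a : Bool) :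
    (S.gremban.degree (v, a) : ℝ) = ∑ w, (S.adjPos v w + S.adjNeg v w) := by
  rw [degree_eq_sum_if_adj, Fintype.sum_prod_type]
  refine Finset.sum_congr rfl fun w _ => ?_
  simp only [← adjMatrix_apply, adjMatrix_gremban_apply, Fintype.sum_bool]
  cases a <;> simp [add_comm]

variable [DecidableEq V]

lemma degMatrix_gremban_submatrix :
    (S.gremban.degMatrix ℝ).submatrix polarityEquiv polarityEquiv =
      Matrix.fromBlocks S.degMat 0 0 S.degMat := by
  ext (u | u) (w | w) <;> by_cases h : u = w <;>
    simp [degMatrix, degMat, h, degree_gremban]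

theorem grembanLap_eq_submatrix_lapMatrix :
    S.grembanLap = (S.gremban.lapMatrix ℝ).submatrix polarityEquiv polarityEquiv := by
  rw [lapMatrix, Matrix.submatrix_sub, Pi.sub_apply, Pi.sub_apply, degMatrix_gremban_submatrix,
    adjMatrix_gremban_submatrix]
  ext (u | u) (w | w) <;> simp [grembanLap, grembanAdj]

end SignedGraph

/-- If a signed graph has `k` connected components, `ℓ` of which are structurally
balanced, then the kernel of the Gremban Laplacian `ℒ` has dimension `k + ℓ`. -/
theorem gremban_laplacian_kernel_dim {V : Type*} [Fintype V] [DecidableEq V]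
    (S : SignedGraph V) :
    Module.finrank ℝ (LinearMap.ker (S.grembanLap).mulVecLin) =
      Nat.card S.G.ConnectedComponent +
        {c : S.G.ConnectedComponent | S.compBalanced c}.ncard := by
  classical
  rw [S.grembanLap_eq_submatrix_lapMatrix, Matrix.finrank_ker_mulVecLin_submatrix,
    ← Matrix.toLin'_apply',
    ← SimpleGraph.card_connectedComponent_eq_finrank_ker_toLin'_lapMatrix,
    ← Nat.card_eq_fintype_card, S.card_connectedComponent_gremban]
end
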